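/- Fix r ≥ 0 and integers n ≥ k ≥ 1. Let z be the sequence z_j = j! · C(j + r, r + 1) for j ≥ 1. Then B_{n,k}(z₁, z₂, …) = (n!/k!) · C(n + (r+1)k − 1, n − k). -/

import Mathlib

/-- The invert transform of a sequence `x : ℕ → ℚ` (indexed from 1, `x 0` ignored):
`(𝒴x)(0) = 0` and `(𝒴x)(n) = x n + ∑_{j=1}^{n-1} x j * (𝒴x)(n-j)` for `n ≥ 1`. -/
def invert (x : ℕ → ℚ) : ℕ → ℚ
  | 0 => 0
  | n + 1 => x (n + 1) + ∑ j ∈ Finset.range n, x (j + 1) * invert x (n - j)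
  termination_by n => n
  decreasing_by omega

/-- The partial Bell polynomial `B_{n,k}(z₁, z₂, …)`, evaluated at a sequence of rationals
`z` (indexed from 1, `z 0` ignored): the sum over all finitely supported `α : ℕ → ℕ` with
`α 0 = 0`, `∑ i, α i = k` and `∑ i, i * α i = n` of `(n! / ∏ i, (α i)!) * ∏ i (z i / i!)^(α i)`. -/
def partialBell (n k : ℕ) (z : ℕ → ℚ) : ℚ :=
  ∑ α ∈ ((Finset.range (n + 1)).finsuppAntidiag k).filter
      (fun α => (∑ i ∈ Finset.range (n + 1), i * α i) = n ∧ α 0 = 0),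
    ((n.factorial : ℚ) / ∏ i ∈ Finset.range (n + 1), ((α i).factorial : ℚ)) *
      ∏ i ∈ Finset.range (n + 1), (z i / (i.factorial : ℚ)) ^ α i

/-! Expanding `(∑_{i ≥ 1} z_i X^i / i!)^k` by the multinomial theorem shows that `B_{n,k}(z)` is
`n!/k!` times its coefficient of `X^n`. For `z_j = j! C(j+r, r+1)` the inner series is
`X/(1-X)^{r+2}`, so its `k`-th power is `X^k/(1-X)^{(r+2)k}`, whose coefficient of `X^n` is
`C(n-k+(r+2)k-1, n-k) = C(n+(r+1)k-1, n-k)`. -/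

open Finset PowerSeries
open scoped Nat

lemma Finset.sum_finsuppAntidiag_eq_sum_piAntidiag {ι μ M : Type*} [DecidableEq ι]
    [AddCommMonoid μ] [HasAntidiagonal μ] [DecidableEq μ] [AddCommMonoid M]
    (s : Finset ι) (n : μ) (G : (ι → μ) → M) :
    ∑ α ∈ s.finsuppAntidiag n, G α = ∑ f ∈ s.piAntidiag n, G f := by
  rw [finsuppAntidiag, sum_map]
  exact sum_attach _ _

namespace PowerSeries

section CommSemiring

variable {R : Type*} [CommSemiring R]

theorem coeff_pow_eq_coeff_trunc_pow (f : R⟦X⟧) (n k : ℕ) :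
    coeff n (f ^ k) = coeff n ((trunc (n + 1) f : R⟦X⟧) ^ k) := by
  have h := congrArg (Polynomial.coeff · n) (trunc_trunc_pow f (n + 1) k)
  simp only [coeff_trunc, Nat.lt_succ_self, if_true] at h
  exact h.symm

theorem coeff_sum_monomial_pow (s : Finset ℕ) (a : ℕ → R) (n k : ℕ) :
    coeff n ((∑ i ∈ s, monomial i (a i)) ^ k) =
      ∑ f ∈ s.piAntidiag k, if ∑ i ∈ s, i * f i = n then
        (Nat.multinomial s f : R) * ∏ i ∈ s, a i ^ f i else 0 := by
  rw [sum_pow_eq_sum_piAntidiag, map_sum]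
  refine sum_congr rfl fun f _ => ?_
  simp_rw [monomial_pow, prod_monomial, ← map_natCast (C (R := R)), coeff_C_mul, coeff_monomial]
  simp only [mul_ite, mul_zero, mul_comm (f _), @eq_comm _ n]

theorem coeff_pow_eq_sum_multinomial (f : R⟦X⟧) (n k : ℕ) :
    coeff n (f ^ k) =
      ∑ α ∈ (range (n + 1)).piAntidiag k, if ∑ i ∈ range (n + 1), i * α i = n then
        (Nat.multinomial (range (n + 1)) α : R) * ∏ i ∈ range (n + 1), coeff i f ^ α i
      else 0 := by
  rw [coeff_pow_eq_coeff_trunc_pow, trunc_apply, Nat.Ico_zero_eq_range,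
    ← Polynomial.coeToPowerSeries.ringHom_apply, map_sum]
  simp_rw [Polynomial.coeToPowerSeries.ringHom_apply, Polynomial.coe_monomial]
  exact coeff_sum_monomial_pow _ _ n k

end CommSemiring

section CommRing

variable {S : Type*} [CommRing S]

theorem invOneSubPow_pow (d k : ℕ) : invOneSubPow S d ^ k = invOneSubPow S (d * k) := by
  rw [invOneSubPow_eq_inv_one_sub_pow, invOneSubPow_eq_inv_one_sub_pow, pow_mul]

theorem coeff_succ_X_mul_invOneSubPow_succ (d m : ℕ) :
    coeff (m + 1) (X * (invOneSubPow S (d + 1)).val) = ((d + m).choose d : S) := by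
  rw [coeff_succ_X_mul, invOneSubPow_val_succ_eq_mk_add_choose, coeff_mk]

theorem coeff_X_pow_mul_invOneSubPow {d k n : ℕ} (hd : 0 < d) (hkn : k ≤ n) :
    coeff n (X ^ k * (invOneSubPow S d).val) = ((d - 1 + (n - k)).choose (d - 1) : S) := by
  rw [coeff_X_pow_mul', if_pos hkn, invOneSubPow_val_eq_mk_sub_one_add_choose_of_pos _ _ hd,
    coeff_mk]

end CommRing

end PowerSeries

-- `z 0` is discarded, matching the constraint `α 0 = 0` in `partialBell`.
noncomputable def egf (z : ℕ → ℚ) : ℚ⟦X⟧ := mk fun i => if i = 0 then 0 else z i / i !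

theorem partialBell_eq_coeff_egf_pow (n k : ℕ) (z : ℕ → ℚ) :
    partialBell n k z = (n ! / k ! : ℚ) * coeff n (egf z ^ k) := by
  rw [partialBell, sum_filter, coeff_pow_eq_sum_multinomial, mul_sum,
    sum_finsuppAntidiag_eq_sum_piAntidiag _ _ fun α =>
      if ∑ i ∈ range (n + 1), i * α i = n ∧ α 0 = 0 then
        (n ! / ∏ i ∈ range (n + 1), ((α i)! : ℚ)) * ∏ i ∈ range (n + 1), (z i / i !) ^ α i
      else 0]
  refine sum_congr rfl fun α hα => ?_
  by_cases hn : ∑ i ∈ range (n + 1), i * α i = n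
  · by_cases h0 : α 0 = 0
    · rw [if_pos ⟨hn, h0⟩, if_pos hn]
      have hcoeff : ∏ i ∈ range (n + 1), (z i / i !) ^ α i
          = ∏ i ∈ range (n + 1), coeff i (egf z) ^ α i := by
        refine prod_congr rfl fun i _ => ?_
        rcases i with _ | i
        · simp [h0]
        · simp [egf]
      have hspec : (∏ i ∈ range (n + 1), ((α i)! : ℚ)) * Nat.multinomial (range (n + 1)) α
          = k ! := by
        rw [← (mem_piAntidiag.1 hα).1]
        exact_mod_cast Nat.multinomial_spec _ α
      have := (Nat.multinomial_pos (range (n + 1)) α).ne'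
      rw [hcoeff, ← mul_assoc, ← hspec]
      congr 1
      field_simp
    · rw [if_neg fun h => h0 h.2, if_pos hn,
        prod_eq_zero (mem_range.2 n.succ_pos) (by simp [egf, h0]), mul_zero, mul_zero]
  · simp [hn]

/-- Bell identity 4: for `r ≥ 0` and `n ≥ k ≥ 1`, with `z_j = j!·C(j+r, r+1)`,
`B_{n,k}(z₁, z₂, …) = (n!/k!) C(n+(r+1)k-1, n-k)`. -/
theorem stmt_19 (r : ℕ) (n k : ℕ) (hk : 1 ≤ k) (hkn : k ≤ n)
    (z : ℕ → ℚ) (hz : ∀ j, 1 ≤ j → z j = (j.factorial : ℚ) * ((j + r).choose (r + 1) : ℚ)) :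
    partialBell n k z
      = ((n.factorial : ℚ) / (k.factorial : ℚ)) *
          ((n + (r + 1) * k - 1).choose (n - k) : ℚ) := by
  have hegf : egf z = X * (invOneSubPow ℚ (r + 2)).val := by
    ext (_ | m)
    · simp [egf]
    · rw [coeff_succ_X_mul_invOneSubPow_succ, egf, coeff_mk, if_neg m.succ_ne_zero,
        hz _ m.succ_pos, mul_div_cancel_left₀ _ (by positivity)]
      congr 2
      omega
  have hpos : 0 < (r + 2) * k := Nat.mul_pos (by omega) hk
  rw [partialBell_eq_coeff_egf_pow, hegf, mul_pow, ← Units.val_pow_eq_pow_val, invOneSubPow_pow,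
    coeff_X_pow_mul_invOneSubPow hpos hkn, Nat.choose_symm_add]
  congr 3
  have : (r + 2) * k = (r + 1) * k + k := by ring
  omega
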